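/- arXiv:1201.6524 — 3 statements merged into one kernel-verified Lean document; each statement's English description precedes it below -/
import Mathlib

section
/- Let φ : ℝ → ℝ be continuously differentiable and define β : ℝ → ℝ² by β(s) = (∫₀ˢ sinh(φ(t)) dt, ∫₀ˢ cosh(φ(t)) dt). Then β is twice differentiable with β''(s) = φ'(s) · (cosh(φ(s)), sinh(φ(s))) and Q(β''(s)) = φ'(s)² for every s; consequently the curvature of β at s, defined as the Lorentzian norm √Q(β''(s)) of the (spacelike) acceleration, equals |φ'(s)|. -/
/-- Lorentzian quadratic form on ℝ²: `Q(v) = v₀² − v₁²`. -/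
def lorentzQ (v : ℝ × ℝ) : ℝ := v.1 ^ 2 - v.2 ^ 2

open Real

theorem lorentzQ_smul (c : ℝ) (v : ℝ × ℝ) : lorentzQ (c • v) = c ^ 2 * lorentzQ v := by
  simp only [lorentzQ, Prod.smul_fst, Prod.smul_snd, smul_eq_mul]
  ring

theorem lorentzQ_cosh_sinh (x : ℝ) : lorentzQ (cosh x, sinh x) = 1 :=
  cosh_sq_sub_sinh_sq x

theorem hasDerivAt_sinh_prodMk_cosh {f : ℝ → ℝ} {f' x : ℝ} (hf : HasDerivAt f f' x) :
    HasDerivAt (fun u => (sinh (f u), cosh (f u))) (f' • (cosh (f x), sinh (f x))) x := by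
  simpa only [Prod.smul_mk, smul_eq_mul, mul_comm f'] using hf.sinh.prodMk hf.cosh

theorem Continuous.hasDerivAt_integral_sinh_prodMk_integral_cosh {f : ℝ → ℝ}
    (hf : Continuous f) (a x : ℝ) :
    HasDerivAt (fun u => (∫ t in a..u, sinh (f t), ∫ t in a..u, cosh (f t)))
      (sinh (f x), cosh (f x)) x :=
  ((continuous_sinh.comp hf).integral_hasStrictDerivAt a x).hasDerivAt.prodMk
    ((continuous_cosh.comp hf).integral_hasStrictDerivAt a x).hasDerivAt

/-- For the timelike planar Euler spiral `β(s) = (∫₀ˢ sinh(φ t) dt, ∫₀ˢ cosh(φ t) dt)`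
with `φ` continuously differentiable, `β` is twice differentiable with
`β'(s) = (sinh(φ s), cosh(φ s))`, `β''(s) = φ'(s) • (cosh(φ s), sinh(φ s))`, and
`Q(β''(s)) = φ'(s)²`; hence the curvature `√(Q(β''(s)))` equals `|φ'(s)|`. -/
theorem timelike_planar_euler_spiral_curvature
    (φ : ℝ → ℝ) (hφ : ContDiff ℝ 1 φ)
    (β : ℝ → ℝ × ℝ)
    (hβ : ∀ s : ℝ, β s =
      (∫ t in (0:ℝ)..s, Real.sinh (φ t), ∫ t in (0:ℝ)..s, Real.cosh (φ t))) :
    ∀ s : ℝ,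
      HasDerivAt β (Real.sinh (φ s), Real.cosh (φ s)) s ∧
      HasDerivAt (fun u : ℝ => ((Real.sinh (φ u), Real.cosh (φ u)) : ℝ × ℝ))
        (deriv φ s • ((Real.cosh (φ s), Real.sinh (φ s)) : ℝ × ℝ)) s ∧
      lorentzQ (deriv φ s • ((Real.cosh (φ s), Real.sinh (φ s)) : ℝ × ℝ))
        = (deriv φ s) ^ 2 ∧
      Real.sqrt (lorentzQ (deriv φ s • ((Real.cosh (φ s), Real.sinh (φ s)) : ℝ × ℝ)))
        = |deriv φ s| := by
  intro s
  have hQ : lorentzQ (deriv φ s • (cosh (φ s), sinh (φ s))) = deriv φ s ^ 2 := by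
    rw [lorentzQ_smul, lorentzQ_cosh_sinh, mul_one]
  refine ⟨?_, hasDerivAt_sinh_prodMk_cosh ((hφ.differentiable one_ne_zero) s).hasDerivAt, hQ, ?_⟩
  · rw [funext hβ]
    exact hφ.continuous.hasDerivAt_integral_sinh_prodMk_integral_cosh 0 s
  · rw [hQ, sqrt_sq_eq_abs]
end

section
/- Let (α, T, N, B, κ, τ) be a timelike Frenet curve in E₁³, let a, b, c, d, λ ∈ ℝ, and define β(s) = α(s) + (a·s + b)·T(s) + λ·N(s) + (c·s + d)·B(s). Then for every s, ⟨β'(s), N(s)⟩ = (a·s + b)·κ(s) − (c·s + d)·τ(s); consequently ⟨β'(s), N(s)⟩ = 0 for all s (the involute–evolute condition between β and the tangent indicatrix of α) if and only if (a·s + b)·κ(s) = (c·s + d)·τ(s) for all s, i.e. α is a generalized Euler spiral with κ/τ = (c·s+d)/(a·s+b). -/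
/-- The Minkowski bilinear form on ℝ³: `⟨x,y⟩ = −x₀y₀ + x₁y₁ + x₂y₂`. -/
def mink (x y : Fin 3 → ℝ) : ℝ := -(x 0 * y 0) + x 1 * y 1 + x 2 * y 2

lemma mink_add_left (x y z : Fin 3 → ℝ) : mink (x + y) z = mink x z + mink y z := by
  simp [mink]; ring

lemma mink_smul_left (r : ℝ) (x z : Fin 3 → ℝ) : mink (r • x) z = r * mink x z := by
  simp [mink]; ring

/-- For a timelike Frenet curve `(α, T, N, B, κ, τ)` in `E₁³` and
`β(s) = α(s) + (a·s+b)·T(s) + λ·N(s) + (c·s+d)·B(s)`, one has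
`⟨β'(s), N(s)⟩ = (a·s+b)·κ(s) − (c·s+d)·τ(s)`; consequently the involute–evolute
condition `⟨β', N⟩ ≡ 0` holds iff `(a·s+b)·κ(s) = (c·s+d)·τ(s)` for all `s`,
i.e. iff `α` is a generalized Euler spiral with `κ/τ = (c·s+d)/(a·s+b)`. -/
theorem beta_involute_evolute_iff_generalized_euler_timelike
    (α T N B : ℝ → Fin 3 → ℝ) (κ τ : ℝ → ℝ)
    (hα : ∀ s, HasDerivAt α (T s) s)
    (hT : ∀ s, HasDerivAt T (κ s • N s) s)
    (hN : ∀ s, HasDerivAt N (κ s • T s + τ s • B s) s)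
    (hB : ∀ s, HasDerivAt B (-τ s • N s) s)
    (hTT : ∀ s, mink (T s) (T s) = -1)
    (hNN : ∀ s, mink (N s) (N s) = 1)
    (hBB : ∀ s, mink (B s) (B s) = 1)
    (hTN : ∀ s, mink (T s) (N s) = 0)
    (hTB : ∀ s, mink (T s) (B s) = 0)
    (hNB : ∀ s, mink (N s) (B s) = 0)
    (a b c d lam : ℝ) (β : ℝ → Fin 3 → ℝ)
    (hβ : ∀ s : ℝ, β s = α s + (a * s + b) • T s + lam • N s + (c * s + d) • B s) :
    (∀ s : ℝ, mink (deriv β s) (N s) = (a * s + b) * κ s - (c * s + d) * τ s) ∧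
    ((∀ s : ℝ, mink (deriv β s) (N s) = 0) ↔
      (∀ s : ℝ, (a * s + b) * κ s = (c * s + d) * τ s)) := by
  have key : ∀ s : ℝ, mink (deriv β s) (N s) = (a * s + b) * κ s - (c * s + d) * τ s := by
    intro s
    have hab : HasDerivAt (fun s : ℝ => a * s + b) a s := by
      simpa using ((hasDerivAt_id s).const_mul a).add_const b
    have hcd : HasDerivAt (fun s : ℝ => c * s + d) c s := by
      simpa using ((hasDerivAt_id s).const_mul c).add_const d
    have h1 : HasDerivAt (fun s => (a * s + b) • T s)
        ((a * s + b) • (κ s • N s) + a • T s) s := hab.smul (hT s)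
    have h2 : HasDerivAt (fun s => lam • N s)
        (lam • (κ s • T s + τ s • B s)) s := (hN s).const_smul lam
    have h3 : HasDerivAt (fun s => (c * s + d) • B s)
        ((c * s + d) • (-τ s • N s) + c • B s) s := hcd.smul (hB s)
    have hβ' : HasDerivAt β
        (T s + ((a * s + b) • (κ s • N s) + a • T s)
          + lam • (κ s • T s + τ s • B s)
          + ((c * s + d) • (-τ s • N s) + c • B s)) s := by
      have := (((hα s).add h1).add h2).add h3
      refine this.congr_of_eventuallyEq ?_
      filter_upwards with t
      simp [hβ t]
    rw [hβ'.deriv]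
    simp only [mink_add_left, mink_smul_left, smul_eq_mul]
    rw [hTN s, hNN s]
    have h5 : mink (B s) (N s) = 0 := by
      have := hNB s; simp [mink] at this ⊢; linarith
    rw [h5]
    ring
  refine ⟨key, ?_, ?_⟩
  · intro h s
    have := key s
    rw [h s] at this
    linarith
  · intro h s
    rw [key s, h s]
    ring
end

section
/- Let (α, T, N, B, κ, τ) be a timelike Frenet curve in E₁³ such that for each s the vectors T(s), N(s), B(s) are linearly independent, let a, b, c, d ∈ ℝ with c·s + d ≠ 0 for all s in the parameter domain, and define the ruling direction X(s) = (a·s + b)·T(s) + (c·s + d)·B(s). Then the ruled surface Φ(s,v) = α(s) + v·X(s) is developable — i.e. det(T(s), X(s), X'(s)) = 0 for all s, where det denotes the determinant of the 3×3 matrix with rows T(s), X(s), X'(s) — if and only if (a·s + b)·κ(s) = (c·s + d)·τ(s) for all s, i.e. α is a generalized Euler spiral with τ/κ = (a·s+b)/(c·s+d). -/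
/-- For a timelike Frenet curve `(α, T, N, B, κ, τ)` in `E₁³` with `T, N, B`
linearly independent at each `s`, and ruling direction
`X(s) = (a·s+b)·T(s) + (c·s+d)·B(s)` with `c·s+d ≠ 0` on the parameter domain,
the ruled surface `Φ(s,v) = α(s) + v·X(s)` is developable — `det(T, X, X') ≡ 0`
— if and only if `(a·s+b)·κ(s) = (c·s+d)·τ(s)` for all `s`, i.e. `α` is a
generalized Euler spiral with `τ/κ = (a·s+b)/(c·s+d)`. -/
theorem ruled_surface_developable_iff_generalized_euler
    (α T N B : ℝ → Fin 3 → ℝ) (κ τ : ℝ → ℝ)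
    (hα : ∀ s, HasDerivAt α (T s) s)
    (hT : ∀ s, HasDerivAt T (κ s • N s) s)
    (hN : ∀ s, HasDerivAt N (κ s • T s + τ s • B s) s)
    (hB : ∀ s, HasDerivAt B (-τ s • N s) s)
    (hTT : ∀ s, mink (T s) (T s) = -1)
    (hNN : ∀ s, mink (N s) (N s) = 1)
    (hBB : ∀ s, mink (B s) (B s) = 1)
    (hTN : ∀ s, mink (T s) (N s) = 0)
    (hTB : ∀ s, mink (T s) (B s) = 0)
    (hNB : ∀ s, mink (N s) (B s) = 0)
    (hind : ∀ s : ℝ, LinearIndependent ℝ ![T s, N s, B s])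
    (a b c d : ℝ) (hcd : ∀ s : ℝ, c * s + d ≠ 0)
    (X : ℝ → Fin 3 → ℝ)
    (hX : ∀ s : ℝ, X s = (a * s + b) • T s + (c * s + d) • B s)
    (Φ : ℝ → ℝ → Fin 3 → ℝ)
    (hΦ : ∀ s v : ℝ, Φ s v = α s + v • X s) :
    (∀ s : ℝ, Matrix.det (Matrix.of ![T s, X s, deriv X s]) = 0) ↔
      (∀ s : ℝ, (a * s + b) * κ s = (c * s + d) * τ s) := by
  have hXfun : X = fun s => (a * s + b) • T s + (c * s + d) • B s := funext hX
  have hderiv : ∀ s : ℝ, deriv X s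
      = ((a * s + b) • κ s • N s + a • T s)
        + ((c * s + d) • -τ s • N s + c • B s) := by
    intro s
    have h1 : HasDerivAt (fun s => a * s + b) a s := by
      simpa using ((hasDerivAt_id s).const_mul a).add_const b
    have h2 : HasDerivAt (fun s => c * s + d) c s := by
      simpa using ((hasDerivAt_id s).const_mul c).add_const d
    have : HasDerivAt X (((a * s + b) • κ s • N s + a • T s)
        + ((c * s + d) • -τ s • N s + c • B s)) s := by
      rw [hXfun]
      exact (h1.smul (hT s)).add (h2.smul (hB s))
    exact this.deriv
  have hdetne : ∀ s : ℝ, Matrix.det (Matrix.of ![T s, N s, B s]) ≠ 0 := by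
    intro s
    have := Matrix.linearIndependent_rows_iff_isUnit.mp
      (show LinearIndependent ℝ (fun i => (Matrix.of ![T s, N s, B s]) i) from hind s)
    exact (Matrix.isUnit_iff_isUnit_det _).mp this |>.ne_zero
  have hkey : ∀ s : ℝ, Matrix.det (Matrix.of ![T s, X s, deriv X s])
      = (c * s + d) * ((c * s + d) * τ s - (a * s + b) * κ s)
        * Matrix.det (Matrix.of ![T s, N s, B s]) := by
    intro s
    rw [hderiv s, hX s]
    simp [Matrix.det_fin_three, Matrix.of_apply, Pi.add_apply, Pi.smul_apply, smul_eq_mul]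
    ring
  constructor
  · intro h s
    have := h s
    rw [hkey s] at this
    rcases mul_eq_zero.mp this with h1 | h1
    · rcases mul_eq_zero.mp h1 with h2 | h2
      · exact absurd h2 (hcd s)
      · linarith [sub_eq_zero.mp h2]
    · exact absurd h1 (hdetne s)
  · intro h s
    rw [hkey s, h s]
    ring
end
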